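/- arXiv:0806.1565 — 7 statements merged into one kernel-verified Lean document; each statement's English description precedes it below -/
import Mathlib

section
/- Any piecewise affine function f: ℝⁿ → ℝᵐ, i.e., a continuous function for which there exists a finite family of affine functions f_k(x) = A_k x + b_k, k = 1,…,K, such that for every x, f(x) ∈ {f_1(x),…,f_K(x)}, is globally Lipschitz continuous with Lipschitz constant α = max_k ‖A_k‖, where ‖·‖ is the operator norm induced by any fixed vector norms on ℝⁿ and ℝᵐ. -/
/-!
An affine piece that agrees with `f` at a point `x` close enough to `x₀` also agrees with `f` at
`x₀`: by continuity, the finitely many pieces that miss `f x₀` stay away from `f` on a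
neighbourhood of `x₀`. Hence `f x - f x₀ = A k (x - x₀)` for `x` near `x₀`, a local Lipschitz
bound at each point with constant `max_k ‖A k‖`. Along a segment such local bounds integrate to a
global one by the one-dimensional fencing inequality.
-/

open Set Filter Topology

theorem eventually_forall_eq_imp_eq {X Y ι : Type*} [TopologicalSpace X] [TopologicalSpace Y]
    [T2Space Y] [Finite ι] {f : X → Y} {g : ι → X → Y} {x₀ : X} (hf : ContinuousAt f x₀)
    (hg : ∀ k, ContinuousAt (g k) x₀) :
    ∀ᶠ x in 𝓝 x₀, ∀ k, f x = g k x → f x₀ = g k x₀ := by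
  refine eventually_all.2 fun k => ?_
  by_cases hk : f x₀ = g k x₀
  · exact Eventually.of_forall fun _ _ => hk
  · filter_upwards [(hf.ne_iff_eventually_ne (hg k)).1 hk] with x hx hfx using absurd hfx hx

theorem eventually_norm_sub_le_of_forall_exists_eq_affine {𝕜 E F ι : Type*}
    [NontriviallyNormedField 𝕜] [NormedAddCommGroup E] [NormedSpace 𝕜 E]
    [NormedAddCommGroup F] [NormedSpace 𝕜 F] [Finite ι] {f : E → F} (hf : Continuous f)
    (A : ι → E →L[𝕜] F) (b : ι → F) (hpa : ∀ x, ∃ k, f x = A k x + b k) (x₀ : E) :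
    ∀ᶠ x in 𝓝 x₀, ‖f x - f x₀‖ ≤ (⨆ k, ‖A k‖) * ‖x - x₀‖ := by
  filter_upwards [eventually_forall_eq_imp_eq (g := fun k x => A k x + b k) hf.continuousAt
    fun k => by fun_prop] with x hx
  obtain ⟨k, hk⟩ := hpa x
  calc ‖f x - f x₀‖ = ‖A k (x - x₀)‖ := by
        rw [hk, hx k hk, add_sub_add_right_eq_sub, map_sub]
    _ ≤ ‖A k‖ * ‖x - x₀‖ := (A k).le_opNorm _
    _ ≤ (⨆ k, ‖A k‖) * ‖x - x₀‖ := by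
        gcongr
        exact le_ciSup (f := fun k => ‖A k‖) (finite_range _).bddAbove k

theorem norm_sub_le_of_forall_eventually_nhdsGT {F : Type*} [NormedAddCommGroup F]
    {g : ℝ → F} {C a b : ℝ} (hab : a ≤ b) (hg : ContinuousOn g (Icc a b))
    (hloc : ∀ t ∈ Ico a b, ∀ᶠ s in 𝓝[>] t, ‖g s - g t‖ ≤ C * (s - t)) :
    ‖g b - g a‖ ≤ C * (b - a) := by
  refine image_le_of_liminf_slope_right_le_deriv_boundary (f := fun u => ‖g u - g a‖)
    (B := fun u => C * (u - a)) (B' := fun _ => C) (by fun_prop) (by simp) (by fun_prop)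
    (fun t _ => ?_) (fun t ht r hr => ?_) (right_mem_Icc.2 hab)
  · simpa using ((hasDerivAt_id t).sub_const a).const_mul C |>.hasDerivWithinAt
  · refine Eventually.frequently ?_
    filter_upwards [hloc t ht, self_mem_nhdsWithin] with s hs hts
    have hst : 0 < s - t := sub_pos.2 hts
    have hslope : ‖g s - g a‖ - ‖g t - g a‖ ≤ C * (s - t) := calc
      ‖g s - g a‖ - ‖g t - g a‖ ≤ ‖(g s - g a) - (g t - g a)‖ := norm_sub_norm_le _ _
      _ = ‖g s - g t‖ := by rw [sub_sub_sub_cancel_right]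
      _ ≤ C * (s - t) := hs
    rw [slope_def_field, div_lt_iff₀ hst]
    exact hslope.trans_lt (mul_lt_mul_of_pos_right hr hst)

theorem norm_sub_le_of_forall_eventually_norm_sub_le {E F : Type*} [NormedAddCommGroup E]
    [NormedSpace ℝ E] [NormedAddCommGroup F] {f : E → F} {C : ℝ} (hf : Continuous f)
    (hloc : ∀ x₀, ∀ᶠ x in 𝓝 x₀, ‖f x - f x₀‖ ≤ C * ‖x - x₀‖) (x y : E) :
    ‖f x - f y‖ ≤ C * ‖x - y‖ := by
  set p : ℝ → E := ⇑(AffineMap.lineMap (k := ℝ) y x)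
  have hp : Continuous p := AffineMap.lineMap_continuous
  have hseg : ‖f (p 1) - f (p 0)‖ ≤ C * ‖x - y‖ * (1 - 0) := by
    refine norm_sub_le_of_forall_eventually_nhdsGT (g := f ∘ p) zero_le_one
      (hf.comp hp).continuousOn fun t _ => ?_
    filter_upwards [nhdsWithin_le_nhds (hp.continuousAt.eventually (hloc (p t))),
      self_mem_nhdsWithin] with s hs hts
    have hdist : ‖p s - p t‖ = (s - t) * ‖x - y‖ := by
      rw [← dist_eq_norm, dist_lineMap_lineMap, Real.dist_eq, abs_of_pos (sub_pos.2 hts),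
        dist_comm, dist_eq_norm]
    simpa [hdist, mul_assoc, mul_comm (s - t)] using hs
  simpa [p] using hseg

theorem piecewiseAffine_lipschitz_general {E F : Type*}
    [NormedAddCommGroup E] [NormedSpace ℝ E]
    [NormedAddCommGroup F] [NormedSpace ℝ F]
    {K : ℕ} (f : E → F) (hf : Continuous f)
    (A : Fin K → E →L[ℝ] F) (b : Fin K → F)
    (hpa : ∀ x : E, ∃ k : Fin K, f x = A k x + b k) :
    ∀ x y : E, ‖f x - f y‖ ≤ (⨆ k, ‖A k‖) * ‖x - y‖ :=
  norm_sub_le_of_forall_eventually_norm_sub_le hf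
    (eventually_norm_sub_le_of_forall_exists_eq_affine hf A b hpa)

/-- A continuous piecewise affine function (a continuous `f` such that for every `x`,
`f x = A_k x + b_k` for some member of a finite family of affine pieces) is globally
Lipschitz with constant `max_k ‖A_k‖`, the largest operator norm of the pieces.
(The normed spaces `E`, `F` play the role of `ℝⁿ`, `ℝᵐ` equipped with arbitrary norms.) -/
theorem piecewiseAffine_lipschitz {E F : Type*}
    [NormedAddCommGroup E] [NormedSpace ℝ E] [FiniteDimensional ℝ E]
    [NormedAddCommGroup F] [NormedSpace ℝ F] [FiniteDimensional ℝ F]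
    {K : ℕ} (f : E → F) (hf : Continuous f)
    (A : Fin K → E →L[ℝ] F) (b : Fin K → F)
    (hpa : ∀ x : E, ∃ k : Fin K, f x = A k x + b k) :
    ∀ x y : E, ‖f x - f y‖ ≤ (⨆ k, ‖A k‖) * ‖x - y‖ :=
  piecewiseAffine_lipschitz_general f hf A b hpa
end

section
/- Waterfilling is nonexpansive in the ‖·‖_{1,∞} norm: for x₀, y₀ ∈ ℝ₊ᴺ and waterlevels μ_x, μ_y chosen so that Σ_k (μ_x − x₀(k))⁺ = Σ_k (μ_y − y₀(k))⁺ = P_T for a fixed P_T ≥ 0, one has ‖(μ_x·1 − x₀)⁺ − (μ_y·1 − y₀)⁺‖_{1,∞} ≤ ‖x₀ − y₀‖_{1,∞}, where ‖z‖_{1,∞} = max{‖(z)⁺‖₁, ‖(z)⁻‖₁}. -/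
/-!
Both waterfilling outputs carry the same total power, so their difference `z` sums to zero and
`‖z⁺‖₁ = ‖z⁻‖₁ = ‖z‖_{1,∞}`. If `μx ≤ μy`, then since the positive part is monotone and
1-Lipschitz, `z⁺ ≤ ((μx − x₀) − (μy − y₀))⁺ ≤ (y₀ − x₀)⁺ = (x₀ − y₀)⁻` componentwise; the case
`μy ≤ μx` is the same with the roles of `x` and `y` exchanged.
-/

/-- The `‖·‖_{1,∞}` norm: `max{‖x⁺‖₁, ‖x⁻‖₁}`. -/
noncomputable def oneInfNorm {N : ℕ} (x : Fin N → ℝ) : ℝ :=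
  max (∑ k, max (x k) 0) (∑ k, max (-x k) 0)

theorem oneInfNorm_neg {N : ℕ} (z : Fin N → ℝ) : oneInfNorm (-z) = oneInfNorm z := by
  simp only [oneInfNorm, Pi.neg_apply, neg_neg, max_comm]

theorem oneInfNorm_eq_sum_posPart_of_sum_eq_zero {N : ℕ} (z : Fin N → ℝ)
    (hz : ∑ k, z k = 0) : oneInfNorm z = ∑ k, max (z k) 0 := by
  have hsplit : ∑ k, z k = ∑ k, max (z k) 0 - ∑ k, max (-z k) 0 := by
    rw [← Finset.sum_sub_distrib]
    exact Finset.sum_congr rfl fun k _ => (max_zero_sub_max_neg_zero_eq_self (z k)).symm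
  rw [oneInfNorm, max_eq_left (by linarith)]

theorem oneInfNorm_le_of_sum_eq_zero_of_posPart_le {N : ℕ} (z w : Fin N → ℝ)
    (hz : ∑ k, z k = 0) (hle : ∀ k, max (z k) 0 ≤ max (-w k) 0) :
    oneInfNorm z ≤ oneInfNorm w := by
  rw [oneInfNorm_eq_sum_posPart_of_sum_eq_zero z hz]
  exact (Finset.sum_le_sum fun k _ => hle k).trans (le_max_right _ _)

theorem posPart_sub_posPart_posPart_le (a b : ℝ) :
    max (max a 0 - max b 0) 0 ≤ max (a - b) 0 := by
  simpa using max_le_max_right 0 (max_sub_max_le_max a 0 b 0)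

theorem waterfilling_posPart_sub_le {μx μy x y : ℝ} (hμ : μx ≤ μy) :
    max (max (μx - x) 0 - max (μy - y) 0) 0 ≤ max (-(x - y)) 0 :=
  (posPart_sub_posPart_posPart_le _ _).trans (max_le_max_right 0 (by linarith))

theorem waterfilling_nonexpansive_oneInfNorm_general {N : ℕ}
    (x₀ y₀ : Fin N → ℝ)
    (PT : ℝ) (μx μy : ℝ)
    (hμx : ∑ k, max (μx - x₀ k) 0 = PT)
    (hμy : ∑ k, max (μy - y₀ k) 0 = PT) :
    oneInfNorm (fun k => max (μx - x₀ k) 0 - max (μy - y₀ k) 0) ≤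
      oneInfNorm (fun k => x₀ k - y₀ k) := by
  wlog hμ : μx ≤ μy generalizing x₀ y₀ μx μy
  · have hswap := this y₀ x₀ μy μx hμy hμx (le_of_not_ge hμ)
    rw [← oneInfNorm_neg, ← oneInfNorm_neg (fun k => x₀ k - y₀ k)]
    convert hswap using 3 <;> simp
  refine oneInfNorm_le_of_sum_eq_zero_of_posPart_le _ _ ?_ fun k => waterfilling_posPart_sub_le hμ
  rw [Finset.sum_sub_distrib, hμx, hμy, sub_self]

/-- Waterfilling is nonexpansive in the `‖·‖_{1,∞}` norm: if the waterlevels `μx, μy`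
are chosen so that both waterfilling outputs have total power `P_T`, then
`‖(μx·1 − x₀)⁺ − (μy·1 − y₀)⁺‖_{1,∞} ≤ ‖x₀ − y₀‖_{1,∞}`. -/
theorem waterfilling_nonexpansive_oneInfNorm {N : ℕ}
    (x₀ y₀ : Fin N → ℝ) (hx : ∀ k, 0 ≤ x₀ k) (hy : ∀ k, 0 ≤ y₀ k)
    (PT : ℝ) (hPT : 0 ≤ PT) (μx μy : ℝ)
    (hμx : ∑ k, max (μx - x₀ k) 0 = PT)
    (hμy : ∑ k, max (μy - y₀ k) 0 = PT) :
    oneInfNorm (fun k => max (μx - x₀ k) 0 - max (μy - y₀ k) 0) ≤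
      oneInfNorm (fun k => x₀ k - y₀ k) :=
  waterfilling_nonexpansive_oneInfNorm_general x₀ y₀ PT μx μy hμx hμy
end

section
/- The SISO waterfilling operator is a Euclidean projection: for any insr vector σ ∈ ℝ₊ᴺ (entries allowed to be zero) and simplex P = {p ∈ ℝ₊ᴺ : Σ_k p_k = P}, the vector wf with components wf_k = (μ − σ_k)⁺, where μ is chosen so that Σ_k (μ − σ_k)⁺ = P, equals the Euclidean projection of −σ onto P: wf = argmin_{z ∈ P} ‖z + σ‖₂. -/
/-- The SISO waterfilling operator is a Euclidean projection onto the simplex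
`{p ∈ ℝ₊ᴺ : Σ p = P}`: the vector with components `(μ − σ_k)⁺`, where `μ` is chosen
so that the components sum to `P`, belongs to the simplex and minimizes the Euclidean
distance to `−σ` over the simplex. -/
theorem waterfilling_eq_projection {N : ℕ}
    (σ : Fin N → ℝ) (hσ : ∀ k, 0 ≤ σ k) (P μ : ℝ) (hP : 0 < P)
    (hμ : ∑ k, max (μ - σ k) 0 = P) :
    ((∀ k, 0 ≤ max (μ - σ k) 0) ∧ ∑ k, max (μ - σ k) 0 = P) ∧
      ∀ z : Fin N → ℝ, (∀ k, 0 ≤ z k) → (∑ k, z k = P) →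
        Real.sqrt (∑ k, (max (μ - σ k) 0 - (-σ k)) ^ 2) ≤
          Real.sqrt (∑ k, (z k - (-σ k)) ^ 2) := by
  set w : Fin N → ℝ := fun k => max (μ - σ k) 0 with hw
  refine ⟨⟨fun k => le_max_right _ _, hμ⟩, fun z hz hzsum => ?_⟩
  apply Real.sqrt_le_sqrt
  -- pointwise key inequality
  have key : ∀ k, μ * (z k - w k) ≤ (w k + σ k) * (z k - w k) := by
    intro k
    rcases le_or_gt (μ - σ k) 0 with h | h
    · have hwk : w k = 0 := max_eq_right h
      rw [hwk]
      simp only [sub_zero, add_zero, zero_add]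
      exact mul_le_mul_of_nonneg_right (by linarith) (hz k)
    · have hwk : w k = μ - σ k := max_eq_left h.le
      rw [hwk]; ring_nf; exact le_refl _
  -- sum of key inequality
  have hsum : μ * (∑ k, z k - ∑ k, w k) ≤ ∑ k, (w k + σ k) * (z k - w k) := by
    rw [← Finset.sum_sub_distrib, Finset.mul_sum]
    exact Finset.sum_le_sum fun k _ => key k
  rw [hzsum, hμ, sub_self, mul_zero] at hsum
  have expand : ∀ k, (z k - (-σ k)) ^ 2 =
      (w k - (-σ k)) ^ 2 + 2 * ((w k + σ k) * (z k - w k)) + (z k - w k) ^ 2 := by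
    intro k; ring
  calc ∑ k, (w k - (-σ k)) ^ 2
      ≤ ∑ k, (w k - (-σ k)) ^ 2 + (2 * ∑ k, (w k + σ k) * (z k - w k)
          + ∑ k, (z k - w k) ^ 2) := by
        have h2 : 0 ≤ ∑ k, (z k - w k) ^ 2 :=
          Finset.sum_nonneg fun k _ => sq_nonneg _
        linarith
    _ = ∑ k, (z k - (-σ k)) ^ 2 := by
        simp only [expand, Finset.sum_add_distrib, Finset.mul_sum]; ring
end

section
/- For a nonnegative square matrix S ∈ ℝ₊^{Q×Q}, its spectral radius satisfies ρ(S) < 1 if and only if there exists a positive vector w ∈ ℝ₊₊^Q such that the weighted induced infinity norm satisfies ‖S‖_{∞}^{w} := max_q (1/w_q) Σ_r |S_{qr}| w_r < 1. -/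
/-!
If the `w`-weighted row sums of `|S|` are `< 1`, then `diag(w)⁻¹ S diag(w)` has `ℓ∞`-operator
norm `< 1`; conjugation does not change the spectrum, and the norm bounds it.

Conversely, if every eigenvalue lies in the open unit disc, then by Gelfand's formula some power
`S ^ N` (`N ≥ 1`) has `ℓ∞`-operator norm `< 1`, i.e. all row sums of `S ^ N` are `< 1`. The
truncated Neumann series `w = ∑_{k<N} Sᵏ 𝟙` then satisfies `S w = w - 𝟙 + S ^ N 𝟙 < w`, and
`w ≥ 𝟙` because `S ≥ 0`.
-/

open Filter Finset Matrix
open scoped NNReal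

namespace spectrum

theorem spectralRadius_lt_of_forall_norm_lt {𝕜 A : Type*} [NormedField 𝕜] [ProperSpace 𝕜]
    [NormedRing A] [NormedAlgebra 𝕜 A] [CompleteSpace A] {a : A} {r : ℝ≥0} (hr : 0 < r)
    (h : ∀ k ∈ spectrum 𝕜 a, ‖k‖ < r) : spectralRadius 𝕜 a < r := by
  rcases (spectrum 𝕜 a).eq_empty_or_nonempty with hempty | hne
  · simpa [spectralRadius, hempty] using hr
  · exact spectralRadius_lt_of_forall_lt_of_nonempty hne fun k hk => mod_cast h k hk

theorem eventually_norm_pow_lt_one {A : Type*} [NormedRing A] [NormedAlgebra ℂ A]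
    [CompleteSpace A] {a : A} (h : spectralRadius ℂ a < 1) : ∀ᶠ n : ℕ in atTop, ‖a ^ n‖ < 1 := by
  filter_upwards [(pow_nnnorm_pow_one_div_tendsto_nhds_spectralRadius a).eventually_lt_const h,
    eventually_gt_atTop 0] with n hn hpos
  rw [← ENNReal.one_rpow (1 / n : ℝ), ENNReal.rpow_lt_rpow_iff (by positivity)] at hn
  exact_mod_cast hn

end spectrum

namespace Matrix

theorem exists_pos_weight_of_rowSum_pow_lt_one {n R : Type*} [Fintype n] [DecidableEq n]
    [CommRing R] [PartialOrder R] [IsStrictOrderedRing R] {S : Matrix n n R}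
    (hS : ∀ i j, 0 ≤ S i j) {N : ℕ} (hN : 0 < N)
    (h : ∀ i, ∑ j, (S ^ N) i j < 1) :
    ∃ w : n → R, (∀ i, 0 < w i) ∧ ∀ i, ∑ j, S i j * w j < w i := by
  have rowSum : ∀ k i, (S ^ k *ᵥ 1) i = ∑ j, (S ^ k) i j := fun k i => by
    simp [mulVec, dotProduct]
  set w := ∑ k ∈ range N, S ^ k *ᵥ 1
  have hSw : S *ᵥ w + 1 = w + S ^ N *ᵥ 1 := by
    simp only [w, mulVec_sum, mulVec_mulVec, ← pow_succ']
    rw [← sum_range_succ, sum_range_succ']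
    simp
  refine ⟨w, fun i => ?_, fun i => ?_⟩
  · have h0 : (S ^ 0 *ᵥ 1) i ≤ w i := by
      simp only [w, Finset.sum_apply]
      exact single_le_sum (f := fun k => (S ^ k *ᵥ 1) i)
        (fun k _ => by rw [rowSum]; exact sum_nonneg fun j _ => pow_apply_nonneg hS k i j)
        (mem_range.mpr hN)
    simp only [pow_zero, one_mulVec, Pi.one_apply] at h0
    exact zero_lt_one.trans_le h0
  · have hi := congrFun hSw i
    simp only [Pi.add_apply, Pi.one_apply, rowSum] at hi
    exact lt_of_add_lt_add_right (hi.trans_lt (add_lt_add_right (h i) _))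

section LinftyOpNorm

attribute [local instance] Matrix.linftyOpSeminormedAddCommGroup Matrix.linftyOpNormedRing
  Matrix.linftyOpNormedAlgebra

theorem linfty_opNorm_lt_iff {m n α : Type*} [Fintype m] [Fintype n] [SeminormedAddCommGroup α]
    (A : Matrix m n α) {r : ℝ} (hr : 0 < r) : ‖A‖ < r ↔ ∀ i, ∑ j, ‖A i j‖ < r := by
  lift r to ℝ≥0 using hr.le
  rw [linfty_opNorm_def, NNReal.coe_lt_coe, Finset.sup_lt_iff (mod_cast hr)]
  simp [← NNReal.coe_lt_coe]

variable {n : Type*} [Fintype n] [DecidableEq n]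

theorem norm_lt_one_of_mem_spectrum_of_weighted_rowSum_lt {𝕜 : Type*} [RCLike 𝕜]
    (A : Matrix n n 𝕜) {w : n → ℝ} (hw : ∀ i, 0 < w i) (h : ∀ i, ∑ j, ‖A i j‖ * w j < w i)
    {μ : 𝕜} (hμ : μ ∈ spectrum 𝕜 A) : ‖μ‖ < 1 := by
  cases isEmpty_or_nonempty n
  · simp [spectrum.of_subsingleton] at hμ
  have hw₀ : ∀ i, (w i : 𝕜) ≠ 0 := fun i => RCLike.ofReal_ne_zero.mpr (hw i).ne'
  let D : (Matrix n n 𝕜)ˣ :=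
    { val := diagonal fun i => (w i : 𝕜)
      inv := diagonal fun i => (w i : 𝕜)⁻¹
      val_inv := by simp [diagonal_mul_diagonal, hw₀]
      inv_val := by simp [diagonal_mul_diagonal, hw₀] }
  have hconj : ‖((D⁻¹ : (Matrix n n 𝕜)ˣ) : Matrix n n 𝕜) * A * D‖ < 1 := by
    rw [linfty_opNorm_lt_iff _ one_pos]
    intro i
    have hi := (inv_mul_lt_one₀ (hw i)).mpr (h i)
    rw [Finset.mul_sum] at hi
    refine lt_of_eq_of_lt (Finset.sum_congr rfl fun j _ => ?_) hi
    change ‖(diagonal (fun i => (w i : 𝕜)⁻¹) * A * diagonal fun i => (w i : 𝕜)) i j‖ = _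
    simp only [mul_diagonal, diagonal_mul, norm_mul, norm_inv, norm_algebraMap', Real.norm_eq_abs,
      abs_of_pos (hw _)]
    ring
  rw [← spectrum.units_conjugate' (u := D)] at hμ
  exact (spectrum.norm_le_norm_of_mem hμ).trans_lt hconj

theorem eventually_rowSum_pow_lt_one {S : Matrix n n ℝ} (hS : ∀ i j, 0 ≤ S i j)
    (h : ∀ μ ∈ spectrum ℂ (S.map Complex.ofReal), ‖μ‖ < 1) :
    ∀ᶠ k in atTop, ∀ i, ∑ j, (S ^ k) i j < 1 := by
  have hρ : spectralRadius ℂ (S.map Complex.ofReal) < 1 := by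
    exact_mod_cast spectrum.spectralRadius_lt_of_forall_norm_lt one_pos (by simpa using h)
  filter_upwards [spectrum.eventually_norm_pow_lt_one hρ] with k hk
  have hpow : S.map Complex.ofReal ^ k = (S ^ k).map Complex.ofReal :=
    (S.map_pow Complex.ofRealHom k).symm
  rw [hpow, linfty_opNorm_lt_iff _ one_pos] at hk
  simpa [abs_of_nonneg (pow_apply_nonneg hS k _ _)] using hk

end LinftyOpNorm

end Matrix

/-- For a nonnegative square matrix `S`, the spectral radius is less than one
(every complex eigenvalue has modulus `< 1`) if and only if there exists a positive
weight vector `w` with weighted induced infinity norm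
`max_q (1/w_q) Σ_r |S_{qr}| w_r < 1`. -/
theorem spectralRadius_lt_one_iff_weighted_infNorm {Q : ℕ}
    (S : Matrix (Fin Q) (Fin Q) ℝ) (hS : ∀ q r, 0 ≤ S q r) :
    (∀ μ ∈ spectrum ℂ (S.map (Complex.ofReal)), ‖μ‖ < 1) ↔
      ∃ w : Fin Q → ℝ, (∀ q, 0 < w q) ∧
        ∀ q, (1 / w q) * ∑ r, |S q r| * w r < 1 := by
  have weighted_iff : ∀ w : Fin Q → ℝ, (∀ q, 0 < w q) → ∀ q,
      (1 / w q) * ∑ r, |S q r| * w r < 1 ↔ ∑ r, ‖(S.map Complex.ofReal) q r‖ * w r < w q := by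
    intro w hw q
    simp [inv_mul_lt_one₀ (hw q)]
  constructor
  · intro h
    obtain ⟨N, hrows, hN⟩ :=
      ((Matrix.eventually_rowSum_pow_lt_one hS h).and (eventually_gt_atTop 0)).exists
    obtain ⟨w, hw, hSw⟩ := Matrix.exists_pos_weight_of_rowSum_pow_lt_one hS hN hrows
    refine ⟨w, hw, fun q => (weighted_iff w hw q).mpr ?_⟩
    simpa [abs_of_nonneg (hS q _)] using hSw q
  · rintro ⟨w, hw, h⟩ μ hμ
    exact Matrix.norm_lt_one_of_mem_spectrum_of_weighted_rowSum_lt _ hw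
      (fun q => (weighted_iff w hw q).mp (h q)) hμ
end

section
/- Equivalence of log-det maximization and matrix projection: Let R ≻ 0 (n×n Hermitian positive definite), H ∈ ℂ^{n×n} nonsingular, and P_T > 0. Then the unique maximizer X* of log det(R + H X Hᴴ) over {X ⪰ 0 : Tr(X) ≤ P_T} coincides with the unique minimizer of ‖X − X₀‖_F² over {X ⪰ 0 : Tr(X) = P_T}, where X₀ = −(Hᴴ R⁻¹ H)⁻¹. -/
open scoped ComplexOrder Matrix

/-- Frobenius norm of a complex matrix. -/
noncomputable def frobNorm {n m : ℕ} (X : Matrix (Fin n) (Fin m) ℂ) : ℝ :=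
  Real.sqrt (∑ i, ∑ j, ‖X i j‖ ^ 2)

/-!
With `N = (Hᴴ R⁻¹ H)⁻¹ ≻ 0` one has `R + H X Hᴴ = H (X + N) Hᴴ`, so the log-det problem maximizes
`det (X + N)` over the convex set `{X ⪰ 0 : Tr X ≤ P}`. At the maximizer `Xm`, with `Y = Xm + N`,
the first-order condition reads `Re Tr (Y⁻¹ (Z - Xm)) ≤ 0` for every feasible `Z`. Testing it
against `Z = P v vᴴ`, where `v` is a unit eigenvector for the smallest eigenvalue `λ` of `Y`, and
comparing with `Y⁻¹ ≤ λ⁻¹` forces `Tr Xm = P` and `Y Xm = λ Xm`. Hence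
`Re Tr (Y (Z - Xm)) = Re Tr ((Y - λ) Z) ≥ 0` whenever `Z ⪰ 0` and `Tr Z = P`: this is the
variational inequality of the Frobenius projection of `X₀ = -N` onto `{Z ⪰ 0 : Tr Z = P}`, and by
the Pythagorean expansion of the Frobenius norm that projection is unique.
-/

open Matrix
open scoped MatrixOrder

namespace Matrix

section RCLike

variable {m 𝕜 : Type*} [Fintype m] [RCLike 𝕜]

theorem trace_mul_vecMulVec_star (M : Matrix m m 𝕜) (v : m → 𝕜) :
    (M * vecMulVec v (star v)).trace = star v ⬝ᵥ (M *ᵥ v) := by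
  rw [trace_mul_comm, vecMulVec_mul, trace_vecMulVec, dotProduct_comm, ← dotProduct_mulVec]

variable [DecidableEq m]

theorem trace_mul_nonneg {A B : Matrix m m 𝕜} (hA : 0 ≤ A) (hB : 0 ≤ B) :
    0 ≤ (A * B).trace := by
  obtain ⟨C, rfl⟩ := CStarAlgebra.nonneg_iff_eq_star_mul_self.mp hB
  rw [star_eq_conjTranspose, ← mul_assoc, trace_mul_comm, ← mul_assoc]
  exact ((nonneg_iff_posSemidef.mp hA).mul_mul_conjTranspose_same C).trace_nonneg

theorem mul_eq_zero_of_trace_mul_eq_zero {A B : Matrix m m 𝕜} (hA : 0 ≤ A) (hB : 0 ≤ B)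
    (h : (A * B).trace = 0) : A * B = 0 := by
  obtain ⟨D, rfl⟩ := CStarAlgebra.nonneg_iff_eq_star_mul_self.mp hA
  obtain ⟨C, rfl⟩ := CStarAlgebra.nonneg_iff_eq_star_mul_self.mp hB
  simp only [star_eq_conjTranspose] at h ⊢
  have hCD : C * Dᴴ = 0 := by
    rw [← trace_conjTranspose_mul_self_eq_zero_iff, ← h, conjTranspose_mul,
      conjTranspose_conjTranspose, ← mul_assoc, trace_mul_comm]
    simp only [mul_assoc]
  calc Dᴴ * D * (Cᴴ * C) = Dᴴ * (C * Dᴴ)ᴴ * C := by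
        simp only [conjTranspose_mul, conjTranspose_conjTranspose, mul_assoc]
    _ = 0 := by simp [hCD]

theorem IsHermitian.exists_algebraMap_le_and_mulVec_eq_smul [Nonempty m] {Y : Matrix m m 𝕜}
    (hY : Y.IsHermitian) :
    ∃ (l : ℝ) (v : m → 𝕜), algebraMap ℝ _ l ≤ Y ∧ Y *ᵥ v = l • v ∧ star v ⬝ᵥ v = 1 := by
  obtain ⟨i, -, hi⟩ := Finset.exists_min_image Finset.univ hY.eigenvalues Finset.univ_nonempty
  refine ⟨hY.eigenvalues i, hY.eigenvectorBasis i, ?_, hY.mulVec_eigenvectorBasis i, ?_⟩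
  · rw [algebraMap_le_iff_le_spectrum (a := Y) hY.isSelfAdjoint,
      hY.spectrum_real_eq_range_eigenvalues]
    rintro _ ⟨j, rfl⟩
    exact hi j (Finset.mem_univ j)
  · rw [dotProduct_comm, ← EuclideanSpace.inner_eq_star_dotProduct, inner_self_eq_norm_sq_to_K,
      hY.eigenvectorBasis.orthonormal.1 i]
    simp

/-- The equality case of `Re Tr (B X) ≤ c Tr X` for `0 ≤ X` and `B ≤ c`. -/
theorem mul_eq_smul_of_le_re_trace_mul {B X : Matrix m m 𝕜} {c P : ℝ} (hc : 0 < c)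
    (hB : B ≤ algebraMap ℝ _ c) (hX : 0 ≤ X) (hXP : RCLike.re X.trace ≤ P)
    (hBX : c * P ≤ RCLike.re (B * X).trace) : B * X = c • X ∧ X.trace = P := by
  have hgap := trace_mul_nonneg (sub_nonneg.mpr hB) hX
  have hgap_eq : ((algebraMap ℝ _ c - B) * X).trace = c • X.trace - (B * X).trace := by
    rw [sub_mul, Algebra.algebraMap_eq_smul_one, smul_mul_assoc, one_mul, trace_sub, trace_smul]
  rw [hgap_eq, RCLike.le_iff_re_im] at hgap
  simp only [map_zero, map_sub, RCLike.smul_re, RCLike.smul_im] at hgap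
  have htr : RCLike.re X.trace = P := le_antisymm hXP (le_of_mul_le_mul_left (by linarith) hc)
  rw [htr] at hgap
  have hzero : (algebraMap ℝ _ c - B) * X = 0 := by
    refine mul_eq_zero_of_trace_mul_eq_zero (sub_nonneg.mpr hB) hX ?_
    rw [hgap_eq]
    refine RCLike.ext ?_ ?_ <;>
      simp only [map_zero, map_sub, RCLike.smul_re, RCLike.smul_im, htr] <;> linarith
  constructor
  · rw [sub_mul, sub_eq_zero, Algebra.algebraMap_eq_smul_one, smul_mul_assoc, one_mul] at hzero
    exact hzero.symm
  · refine RCLike.ext (by simp [htr]) ?_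
    simpa using (RCLike.le_iff_re_im.mp (nonneg_iff_posSemidef.mp hX).trace_nonneg).2.symm

theorem re_trace_mul_sub_nonneg_of_mul_eq_smul {Y X Z : Matrix m m 𝕜} {l : ℝ}
    (hl : algebraMap ℝ _ l ≤ Y) (hYX : Y * X = l • X) (hZ : 0 ≤ Z) (htr : X.trace = Z.trace) :
    0 ≤ RCLike.re (Y * (Z - X)).trace := by
  have hsplit : Y * (Z - X) = (Y - algebraMap ℝ _ l) * Z + l • (Z - X) := by
    rw [mul_sub, hYX, sub_mul, Algebra.algebraMap_eq_smul_one, smul_mul_assoc, one_mul, smul_sub]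
    abel
  rw [hsplit, trace_add, trace_smul, trace_sub, htr, sub_self, smul_zero, add_zero]
  exact (RCLike.nonneg_iff.mp (trace_mul_nonneg (sub_nonneg.mpr hl) hZ)).1

end RCLike

variable {m : Type*} [Fintype m] [DecidableEq m]

open scoped Norms.L2Operator in
theorem inv_le_algebraMap_inv_of_algebraMap_le {Y : Matrix m m ℂ} {l : ℝ} (hl : 0 < l)
    (h : algebraMap ℝ _ l ≤ Y) : Y⁻¹ ≤ algebraMap ℝ (Matrix m m ℂ) l⁻¹ := by
  have := CStarAlgebra.ringInverse_le_ringInverse h (isStrictlyPositive_algebraMap hl)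
  rwa [← nonsing_inv_eq_ringInverse, ← nonsing_inv_eq_ringInverse,
    inv_eq_left_inv (A := algebraMap ℝ _ l) (B := algebraMap ℝ _ l⁻¹)
      (by rw [← map_mul, inv_mul_cancel₀ hl.ne', map_one])] at this

open Polynomial in
theorem hasDerivAt_det_add_smul {𝕜 : Type*} [NontriviallyNormedField 𝕜] {Y : Matrix m m 𝕜}
    (hY : IsUnit Y) (D : Matrix m m 𝕜) :
    HasDerivAt (fun t : 𝕜 => (Y + t • D).det) (Y.det * (Y⁻¹ * D).trace) 0 := by
  set M := Y⁻¹ * D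
  set p := det (1 + (X : 𝕜[X]) • M.map C)
  have hp (t : 𝕜) : (Y + t • D).det = Y.det * p.eval t := by
    have : Y + t • D = Y * (1 + t • M) := by
      rw [mul_add, mul_one, mul_smul_comm,
        mul_nonsing_inv_cancel_left _ _ ((isUnit_iff_isUnit_det Y).mp hY)]
    rw [this, det_mul, ← coe_evalRingHom, RingHom.map_det]
    congr 2
    ext i j
    by_cases hij : i = j <;> simp [hij] <;> ring
  simp_rw [hp, ← derivative_det_one_add_X_smul]
  exact (p.hasDerivAt 0).const_mul _

theorem PosDef.re_trace_inv_mul_nonpos_of_isLocalMaxOn {Y D : Matrix m m ℂ} (hY : Y.PosDef)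
    (h : IsLocalMaxOn (fun t : ℝ => (Y + t • D).det.re) (Set.Ici 0) 0) :
    (Y⁻¹ * D).trace.re ≤ 0 := by
  have hderiv : HasDerivAt (fun t : ℝ => (Y + t • D).det.re) (Y.det * (Y⁻¹ * D).trace).re 0 := by
    simpa [Complex.coe_smul] using (hasDerivAt_det_add_smul hY.isUnit D).real_of_complex
  have hslope := h.hasFDerivWithinAt_nonpos hderiv.hasFDerivAt.hasFDerivWithinAt (y := 1)
    (mem_posTangentConeAt_of_segment_subset (by
      rw [zero_add, segment_eq_Icc zero_le_one]; exact Set.Icc_subset_Ici_self))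
  obtain ⟨hre, him⟩ := Complex.lt_def.mp hY.det_pos
  simp only [Complex.mul_re, ← him, Complex.zero_im, zero_mul, sub_zero,
    ContinuousLinearMap.toSpanSingleton_apply, one_smul] at hslope
  exact nonpos_of_mul_nonpos_right hslope hre

theorem re_trace_inv_mul_sub_nonpos_of_isMaxOn {S : Set (Matrix m m ℂ)} (hS : Convex ℝ S)
    {N X Z : Matrix m m ℂ} (hXN : (X + N).PosDef) (hX : X ∈ S)
    (hmax : IsMaxOn (fun X => (X + N).det.re) S X) (hZ : Z ∈ S) :
    ((X + N)⁻¹ * (Z - X)).trace.re ≤ 0 := by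
  refine hXN.re_trace_inv_mul_nonpos_of_isLocalMaxOn ?_
  filter_upwards [Icc_mem_nhdsGE zero_lt_one] with t ht
  simpa only [zero_smul, add_zero, add_right_comm] using
    isMaxOn_iff.mp hmax _ (hS.add_smul_sub_mem hX hZ ht)

theorem PosDef.inv_conjTranspose_mul_inv_mul {R H : Matrix m m ℂ} (hR : R.PosDef)
    (hH : IsUnit H.det) : (Hᴴ * R⁻¹ * H)⁻¹.PosDef :=
  (hR.inv.conjTranspose_mul_mul_same
    (mulVec_injective_of_isUnit ((isUnit_iff_isUnit_det H).mpr hH))).inv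

theorem det_add_mul_mul_conjTranspose {R H : Matrix m m ℂ} (hR : IsUnit R.det)
    (hH : IsUnit H.det) (X : Matrix m m ℂ) :
    (R + H * X * Hᴴ).det = Complex.normSq H.det * (X + (Hᴴ * R⁻¹ * H)⁻¹).det := by
  have hHc : IsUnit Hᴴ.det := by rw [det_conjTranspose]; exact hH.star
  have hHNH : H * (Hᴴ * R⁻¹ * H)⁻¹ * Hᴴ = R := by
    rw [mul_inv_rev, mul_inv_rev, nonsing_inv_nonsing_inv _ hR, ← mul_assoc, ← mul_assoc,
      mul_nonsing_inv _ hH, one_mul, mul_assoc, nonsing_inv_mul _ hHc, mul_one]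
  calc (R + H * X * Hᴴ).det = (H * (X + (Hᴴ * R⁻¹ * H)⁻¹) * Hᴴ).det := by
        rw [mul_add, add_mul, hHNH, add_comm]
    _ = _ := by
        rw [det_mul, det_mul, det_conjTranspose, mul_right_comm, Complex.star_def,
          Complex.mul_conj]

theorem re_det_add_le_of_log_re_det_le {R H X X' : Matrix m m ℂ} (hR : R.PosDef)
    (hH : IsUnit H.det) (hX : X.PosSemidef) (hX' : X'.PosSemidef)
    (h : Real.log (R + H * X * Hᴴ).det.re ≤ Real.log (R + H * X' * Hᴴ).det.re) :
    (X + (Hᴴ * R⁻¹ * H)⁻¹).det.re ≤ (X' + (Hᴴ * R⁻¹ * H)⁻¹).det.re := by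
  have hN := hR.inv_conjTranspose_mul_inv_mul hH
  have hk : 0 < Complex.normSq H.det := Complex.normSq_pos.mpr hH.ne_zero
  have hpos {Z : Matrix m m ℂ} (hZ : Z.PosSemidef) : 0 < (Z + (Hᴴ * R⁻¹ * H)⁻¹).det.re :=
    (Complex.lt_def.mp (PosDef.posSemidef_add hZ hN).det_pos).1
  simp only [det_add_mul_mul_conjTranspose ((isUnit_iff_isUnit_det R).mp hR.isUnit) hH,
    Complex.re_ofReal_mul] at h
  rwa [Real.log_le_log_iff (mul_pos hk (hpos hX)) (mul_pos hk (hpos hX')),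
    mul_le_mul_iff_of_pos_left hk] at h

end Matrix

def psdTraceLE (m : Type*) [Fintype m] (P : ℝ) : Set (Matrix m m ℂ) :=
  {X | X.PosSemidef ∧ X.trace.re ≤ P}

theorem convex_psdTraceLE (m : Type*) [Fintype m] (P : ℝ) : Convex ℝ (psdTraceLE m P) := by
  rintro X ⟨hX, hXP⟩ Z ⟨hZ, hZP⟩ a b ha hb hab
  refine ⟨(hX.smul ha).add (hZ.smul hb), ?_⟩
  simp only [trace_add, trace_smul, Complex.add_re, Complex.smul_re, smul_eq_mul]
  calc a * X.trace.re + b * Z.trace.re ≤ a * P + b * P :=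
        add_le_add (mul_le_mul_of_nonneg_left hXP ha) (mul_le_mul_of_nonneg_left hZP hb)
    _ = P := by rw [← add_mul, hab, one_mul]

theorem exists_mul_eq_smul_of_forall_re_trace_inv_mul_sub_nonpos {m : Type*} [Fintype m]
    [DecidableEq m] [Nonempty m] {Y X : Matrix m m ℂ} {P : ℝ} (hY : Y.PosDef)
    (hX : X ∈ psdTraceLE m P) (hVI : ∀ Z ∈ psdTraceLE m P, (Y⁻¹ * (Z - X)).trace.re ≤ 0) :
    ∃ l : ℝ, algebraMap ℝ _ l ≤ Y ∧ Y * X = l • X ∧ X.trace = P := by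
  obtain ⟨l, v, hlY, hYv, hvv⟩ := hY.isHermitian.exists_algebraMap_le_and_mulVec_eq_smul
  have hv : v ≠ 0 := by rintro rfl; simp at hvv
  have hl : 0 < l := by
    have := hY.dotProduct_mulVec_pos hv
    rwa [hYv, dotProduct_smul, hvv, Complex.real_smul, mul_one, Complex.zero_lt_real] at this
  have hYu : IsUnit Y.det := (isUnit_iff_isUnit_det Y).mp hY.isUnit
  have hY'v : Y⁻¹ *ᵥ v = l⁻¹ • v := by
    calc Y⁻¹ *ᵥ v = l⁻¹ • (Y⁻¹ *ᵥ (l • v)) := by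
          rw [mulVec_smul, smul_smul, inv_mul_cancel₀ hl.ne', one_smul]
      _ = l⁻¹ • v := by rw [← hYv, mulVec_mulVec, nonsing_inv_mul _ hYu, one_mulVec]
  have hP : 0 ≤ P := (Complex.le_def.mp hX.1.trace_nonneg).1.trans hX.2
  have hlower : l⁻¹ * P ≤ (Y⁻¹ * X).trace.re := by
    have htrE : (vecMulVec v (star v)).trace = 1 := by
      rw [trace_vecMulVec, dotProduct_comm, hvv]
    have := hVI (P • vecMulVec v (star v))
      ⟨(posSemidef_vecMulVec_self_star v).smul hP, by simp [htrE]⟩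
    rw [mul_sub, trace_sub, mul_smul_comm, trace_smul, trace_mul_vecMulVec_star, hY'v,
      dotProduct_smul, hvv] at this
    simpa [mul_comm] using this
  obtain ⟨hY'X, htr⟩ := mul_eq_smul_of_le_re_trace_mul (inv_pos.mpr hl)
    (inv_le_algebraMap_inv_of_algebraMap_le hl hlY) (nonneg_iff_posSemidef.mpr hX.1) hX.2 hlower
  refine ⟨l, hlY, ?_, htr⟩
  calc Y * X = l • (Y * (l⁻¹ • X)) := by
        rw [mul_smul_comm, smul_smul, mul_inv_cancel₀ hl.ne', one_smul]
    _ = l • X := by rw [← hY'X, mul_nonsing_inv_cancel_left _ _ hYu]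

theorem frobNorm_sq_eq_re_trace {n m : ℕ} (X : Matrix (Fin n) (Fin m) ℂ) :
    frobNorm X ^ 2 = (Xᴴ * X).trace.re := by
  rw [frobNorm, Real.sq_sqrt (by positivity), trace, Complex.re_sum, Finset.sum_comm]
  simp [mul_apply, Complex.re_sum, ← Complex.normSq_eq_norm_sq, Complex.normSq_apply]

theorem frobNorm_eq_zero_iff {n m : ℕ} {X : Matrix (Fin n) (Fin m) ℂ} :
    frobNorm X = 0 ↔ X = 0 := by
  rw [frobNorm, Real.sqrt_eq_zero (by positivity),
    Finset.sum_eq_zero_iff_of_nonneg fun i _ => by positivity, ← Matrix.ext_iff]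
  simp_rw [Finset.sum_eq_zero_iff_of_nonneg fun j _ => sq_nonneg ‖X _ j‖]
  simp

theorem frobNorm_add_sq {n m : ℕ} (E F : Matrix (Fin n) (Fin m) ℂ) :
    frobNorm (E + F) ^ 2 = frobNorm E ^ 2 + frobNorm F ^ 2 + 2 * (Fᴴ * E).trace.re := by
  have hcross : (Eᴴ * F).trace.re = (Fᴴ * E).trace.re := by
    rw [← conjTranspose_conjTranspose (Eᴴ * F), conjTranspose_mul, conjTranspose_conjTranspose,
      trace_conjTranspose, Complex.star_def, Complex.conj_re]
  simp only [frobNorm_sq_eq_re_trace, conjTranspose_add, Matrix.add_mul, Matrix.mul_add,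
    trace_add, Complex.add_re, hcross]
  ring

theorem eq_of_frobNorm_sub_sq_le {n : ℕ} {A X Y : Matrix (Fin n) (Fin n) ℂ}
    (hle : frobNorm (Y - A) ^ 2 ≤ frobNorm (X - A) ^ 2)
    (hXY : 0 ≤ ((X - A)ᴴ * (Y - X)).trace.re) : Y = X := by
  have hexp := frobNorm_add_sq (Y - X) (X - A)
  rw [sub_add_sub_cancel] at hexp
  have : frobNorm (Y - X) = 0 :=
    (pow_eq_zero_iff two_ne_zero).mp (le_antisymm (by linarith) (sq_nonneg _))
  exact sub_eq_zero.mp (frobNorm_eq_zero_iff.mp this)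

theorem logdet_max_eq_projection_general {n : ℕ}
    (R H : Matrix (Fin n) (Fin n) ℂ) (hR : R.PosDef) (hH : IsUnit H.det)
    (PT : ℝ)
    (Xm Xp : Matrix (Fin n) (Fin n) ℂ)
    (hXmMem : Xm.PosSemidef ∧ Xm.trace.re ≤ PT)
    (hXmMax : ∀ X : Matrix (Fin n) (Fin n) ℂ, X.PosSemidef → X.trace.re ≤ PT →
      Real.log (R + H * X * Hᴴ).det.re ≤ Real.log (R + H * Xm * Hᴴ).det.re)
    (hXpMem : Xp.PosSemidef ∧ Xp.trace = (PT : ℂ))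
    (hXpMin : ∀ X : Matrix (Fin n) (Fin n) ℂ, X.PosSemidef → X.trace = (PT : ℂ) →
      frobNorm (Xp - (-(Hᴴ * R⁻¹ * H)⁻¹)) ^ 2 ≤ frobNorm (X - (-(Hᴴ * R⁻¹ * H)⁻¹)) ^ 2) :
    Xm = Xp := by
  cases isEmpty_or_nonempty (Fin n)
  · exact Subsingleton.elim _ _
  have hY := PosDef.posSemidef_add hXmMem.1 (hR.inv_conjTranspose_mul_inv_mul hH)
  have hmax : IsMaxOn (fun X => (X + (Hᴴ * R⁻¹ * H)⁻¹).det.re) (psdTraceLE (Fin n) PT) Xm :=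
    fun X hX => re_det_add_le_of_log_re_det_le hR hH hX.1 hXmMem.1 (hXmMax X hX.1 hX.2)
  obtain ⟨l, hl, hYXm, htr⟩ := exists_mul_eq_smul_of_forall_re_trace_inv_mul_sub_nonpos hY hXmMem
    fun Z hZ => re_trace_inv_mul_sub_nonpos_of_isMaxOn (convex_psdTraceLE _ PT) hY hXmMem hmax hZ
  refine (eq_of_frobNorm_sub_sq_le (hXpMin Xm hXmMem.1 htr) ?_).symm
  rw [sub_neg_eq_add, hY.isHermitian.eq]
  exact re_trace_mul_sub_nonneg_of_mul_eq_smul hl hYXm (nonneg_iff_posSemidef.mpr hXpMem.1)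
    (htr.trans hXpMem.2.symm)

/-- Equivalence of log-det maximization and matrix projection: for `R ≻ 0`,
`H` nonsingular and `P_T > 0`, a maximizer of `log det(R + H X Hᴴ)` over
`{X ⪰ 0 : Tr X ≤ P_T}` coincides with a minimizer of `‖X − X₀‖_F²` over
`{X ⪰ 0 : Tr X = P_T}`, where `X₀ = −(Hᴴ R⁻¹ H)⁻¹`. -/
theorem logdet_max_eq_projection {n : ℕ}
    (R H : Matrix (Fin n) (Fin n) ℂ) (hR : R.PosDef) (hH : IsUnit H.det)
    (PT : ℝ) (hPT : 0 < PT)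
    (Xm Xp : Matrix (Fin n) (Fin n) ℂ)
    (hXmMem : Xm.PosSemidef ∧ Xm.trace.re ≤ PT)
    (hXmMax : ∀ X : Matrix (Fin n) (Fin n) ℂ, X.PosSemidef → X.trace.re ≤ PT →
      Real.log (R + H * X * Hᴴ).det.re ≤ Real.log (R + H * Xm * Hᴴ).det.re)
    (hXpMem : Xp.PosSemidef ∧ Xp.trace = (PT : ℂ))
    (hXpMin : ∀ X : Matrix (Fin n) (Fin n) ℂ, X.PosSemidef → X.trace = (PT : ℂ) →
      frobNorm (Xp - (-(Hᴴ * R⁻¹ * H)⁻¹)) ^ 2 ≤ frobNorm (X - (-(Hᴴ * R⁻¹ * H)⁻¹)) ^ 2) :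
    Xm = Xp :=
  logdet_max_eq_projection_general R H hR hH PT Xm Xp hXmMem hXmMax hXpMem hXpMin
end

section
/- Contraction property of the MIMO waterfilling mapping: Let WF_q(Q_{−q}) = [−(H_{qq}ᴴ R_{−q}(Q_{−q})⁻¹ H_{qq})⁻¹]_{Q_q} be the projection-form waterfilling where R_{−q}(Q_{−q}) = R_{n_q} + Σ_{r≠q} H_{rq} Q_r H_{rq}ᴴ, with R_{n_q} ≻ 0 and H_{qq} invertible. Then for all feasible profiles Q⁽¹⁾, Q⁽²⁾ and each q, ‖WF_q(Q_{−q}⁽¹⁾) − WF_q(Q_{−q}⁽²⁾)‖_F ≤ Σ_{r≠q} ρ(H_{rq}ᴴ H_{qq}^{−H} H_{qq}^{−1} H_{rq}) ‖Q_r⁽¹⁾ − Q_r⁽²⁾‖_F. -/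
open scoped ComplexOrder Matrix

/-- Spectral radius of a complex square matrix. -/
noncomputable def specRad {m : ℕ} (A : Matrix (Fin m) (Fin m) ℂ) : ℝ :=
  ⨆ μ : spectrum ℂ A, ‖(μ : ℂ)‖

/-!
Since `R_{-q}` is invertible, `-(H_qqᴴ R_{-q}⁻¹ H_qq)⁻¹ = -H_qq⁻¹ R_{-q} H_qq⁻ᴴ`,
which is affine in `Q_{-q}`: the difference of two such points is
`∑_{r ≠ q} A_r (Q_r⁽²⁾ - Q_r⁽¹⁾) A_rᴴ` with `A_r = H_qq⁻¹ H_rq`. Projection onto a convex set is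
nonexpansive, so it remains to bound each term; and `‖A X Aᴴ‖_F ≤ ρ(Aᴴ A) ‖X‖_F` because
`ρ(Aᴴ A) I - Aᴴ A ⪰ 0` gives `‖A M‖_F² = Tr(Mᴴ Aᴴ A M) ≤ ρ(Aᴴ A) ‖M‖_F²`.
-/

open Matrix

lemma le_specRad_of_mem_spectrum {m : ℕ} {A : Matrix (Fin m) (Fin m) ℂ} {x : ℝ}
    (hx : x ∈ spectrum ℝ A) : x ≤ specRad A :=
  calc x ≤ ‖(x : ℂ)‖ := by rw [Complex.norm_real]; exact Real.le_norm_self x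
    _ ≤ specRad A := le_ciSup (f := fun μ : spectrum ℂ A => ‖(μ : ℂ)‖)
        (Set.finite_range _).bddAbove ⟨_, spectrum.algebraMap_mem ℂ hx⟩

open scoped MatrixOrder in
lemma Matrix.IsHermitian.posSemidef_specRad_smul_one_sub {m : ℕ} {B : Matrix (Fin m) (Fin m) ℂ}
    (hB : B.IsHermitian) :
    ((specRad B : ℂ) • (1 : Matrix (Fin m) (Fin m) ℂ) - B).PosSemidef := by
  have := le_algebraMap_of_spectrum_le (fun x hx => le_specRad_of_mem_spectrum hx) hB.isSelfAdjoint
  rwa [Matrix.le_iff, Algebra.algebraMap_eq_smul_one, ← Complex.coe_smul] at this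

lemma trace_conjTranspose_mul_self_eq_frobNorm_sq {a b : ℕ} (X : Matrix (Fin a) (Fin b) ℂ) :
    (Xᴴ * X).trace = ((frobNorm X ^ 2 : ℝ) : ℂ) := by
  rw [frobNorm, Real.sq_sqrt (by positivity), Finset.sum_comm]
  push_cast
  simp [Matrix.trace, Matrix.mul_apply, Complex.conj_mul']

lemma frobNorm_nonneg {a b : ℕ} (X : Matrix (Fin a) (Fin b) ℂ) : 0 ≤ frobNorm X :=
  Real.sqrt_nonneg _

lemma frobNorm_conjTranspose {a b : ℕ} (X : Matrix (Fin a) (Fin b) ℂ) :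
    frobNorm Xᴴ = frobNorm X := by
  rw [frobNorm, frobNorm, Finset.sum_comm]
  simp

lemma frobNorm_mul_le_of_posSemidef {a b k : ℕ} {A : Matrix (Fin a) (Fin b) ℂ} {c : ℝ}
    (hc : 0 ≤ c) (hA : ((c : ℂ) • (1 : Matrix (Fin b) (Fin b) ℂ) - Aᴴ * A).PosSemidef)
    (M : Matrix (Fin b) (Fin k) ℂ) : frobNorm (A * M) ≤ √c * frobNorm M := by
  have h := (hA.conjTranspose_mul_mul_same M).trace_nonneg
  rw [Matrix.mul_sub, Matrix.sub_mul, Matrix.mul_smul, Matrix.mul_one, Matrix.smul_mul,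
    trace_sub, trace_smul, ← Matrix.mul_assoc, Matrix.mul_assoc _ A, ← conjTranspose_mul,
    trace_conjTranspose_mul_self_eq_frobNorm_sq, trace_conjTranspose_mul_self_eq_frobNorm_sq,
    smul_eq_mul, ← Complex.ofReal_mul, ← Complex.ofReal_sub, Complex.zero_le_real, sub_nonneg] at h
  rw [← Real.sqrt_sq (frobNorm_nonneg _), ← Real.sqrt_sq (frobNorm_nonneg M), ← Real.sqrt_mul hc]
  exact Real.sqrt_le_sqrt h

lemma frobNorm_mul_mul_conjTranspose_le {a b : ℕ} (A : Matrix (Fin a) (Fin b) ℂ)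
    (X : Matrix (Fin b) (Fin b) ℂ) :
    frobNorm (A * X * Aᴴ) ≤ specRad (Aᴴ * A) * frobNorm X := by
  have hρ : 0 ≤ specRad (Aᴴ * A) := Real.iSup_nonneg fun _ => norm_nonneg _
  have hA := (posSemidef_conjTranspose_mul_self A).isHermitian.posSemidef_specRad_smul_one_sub
  calc frobNorm (A * X * Aᴴ) = frobNorm (A * (A * Xᴴ)ᴴ) := by
        rw [conjTranspose_mul, conjTranspose_conjTranspose, Matrix.mul_assoc]
    _ ≤ √(specRad (Aᴴ * A)) * frobNorm (A * Xᴴ) := by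
        rw [← frobNorm_conjTranspose (A * Xᴴ)]
        exact frobNorm_mul_le_of_posSemidef hρ hA _
    _ ≤ √(specRad (Aᴴ * A)) * (√(specRad (Aᴴ * A)) * frobNorm Xᴴ) := by
        gcongr
        exact frobNorm_mul_le_of_posSemidef hρ hA _
    _ = specRad (Aᴴ * A) * frobNorm X := by
        rw [frobNorm_conjTranspose, ← mul_assoc, Real.mul_self_sqrt hρ]

noncomputable def frobeniusFlatten {a b : ℕ} :
    Matrix (Fin a) (Fin b) ℂ →ₗ[ℝ] EuclideanSpace ℂ (Fin a × Fin b) where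
  toFun X := WithLp.toLp 2 fun p => X p.1 p.2
  map_add' _ _ := rfl
  map_smul' _ _ := rfl

lemma norm_frobeniusFlatten {a b : ℕ} (X : Matrix (Fin a) (Fin b) ℂ) :
    ‖frobeniusFlatten X‖ = frobNorm X := by
  rw [EuclideanSpace.norm_eq, frobNorm, Fintype.sum_prod_type]
  rfl

lemma frobNorm_sub_comm {a b : ℕ} (X Y : Matrix (Fin a) (Fin b) ℂ) :
    frobNorm (X - Y) = frobNorm (Y - X) := by
  simp only [← norm_frobeniusFlatten, map_sub, norm_sub_rev]

lemma frobNorm_sum_le {a b : ℕ} {ι : Type*} (s : Finset ι) (f : ι → Matrix (Fin a) (Fin b) ℂ) :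
    frobNorm (∑ r ∈ s, f r) ≤ ∑ r ∈ s, frobNorm (f r) := by
  simp only [← norm_frobeniusFlatten, map_sum]
  exact norm_sum_le _ _

open scoped RealInnerProductSpace in
lemma norm_sub_le_of_isMinOn {F : Type*} [NormedAddCommGroup F] [InnerProductSpace ℝ F]
    {K : Set F} (hK : Convex ℝ K) {x₁ x₂ p₁ p₂ : F} (hp₁ : p₁ ∈ K) (hp₂ : p₂ ∈ K)
    (hmin₁ : IsMinOn (fun z => ‖z - x₁‖) K p₁) (hmin₂ : IsMinOn (fun z => ‖z - x₂‖) K p₂) :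
    ‖p₁ - p₂‖ ≤ ‖x₁ - x₂‖ := by
  have variational : ∀ {x p}, p ∈ K → IsMinOn (fun z => ‖z - x‖) K p →
      ∀ w ∈ K, ⟪x - p, w - p⟫ ≤ 0 := by
    intro x p hp hmin
    have : Nonempty K := ⟨⟨p, hp⟩⟩
    refine (norm_eq_iInf_iff_real_inner_le_zero hK hp).mp (le_antisymm
      (le_ciInf fun w => ?_) (ciInf_le ⟨0, ?_⟩ (⟨p, hp⟩ : K)))
    · simpa only [norm_sub_rev x] using isMinOn_iff.mp hmin w w.2
    · rintro _ ⟨w, rfl⟩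
      exact norm_nonneg _
  have h₁ := variational hp₁ hmin₁ p₂ hp₂
  have h₂ := variational hp₂ hmin₂ p₁ hp₁
  have key : ‖p₁ - p₂‖ ^ 2 ≤ ⟪x₁ - x₂, p₁ - p₂⟫ := by
    have h₁' : ⟪p₁ - x₁, p₁ - p₂⟫ ≤ 0 := by rwa [← inner_neg_neg, neg_sub, neg_sub]
    have split : ⟪p₁ - p₂, p₁ - p₂⟫ - ⟪x₁ - x₂, p₁ - p₂⟫
        = ⟪p₁ - x₁, p₁ - p₂⟫ + ⟪x₂ - p₂, p₁ - p₂⟫ := by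
      rw [← inner_sub_left, ← inner_add_left]
      congr 1
      abel
    rw [← real_inner_self_eq_norm_sq]
    linarith
  nlinarith [real_inner_le_norm (x₁ - x₂) (p₁ - p₂), norm_nonneg (p₁ - p₂), norm_nonneg (x₁ - x₂)]

lemma frobNorm_sub_le_of_isMinOn {a b : ℕ} {K : Set (Matrix (Fin a) (Fin b) ℂ)}
    (hK : Convex ℝ K) {T₁ T₂ W₁ W₂ : Matrix (Fin a) (Fin b) ℂ} (hW₁ : W₁ ∈ K) (hW₂ : W₂ ∈ K)
    (hmin₁ : IsMinOn (fun Z => frobNorm (Z - T₁)) K W₁)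
    (hmin₂ : IsMinOn (fun Z => frobNorm (Z - T₂)) K W₂) :
    frobNorm (W₁ - W₂) ≤ frobNorm (T₁ - T₂) := by
  let : InnerProductSpace ℝ (EuclideanSpace ℂ (Fin a × Fin b)) := .complexToReal
  have flatten_isMinOn : ∀ {T W}, IsMinOn (fun Z => frobNorm (Z - T)) K W →
      IsMinOn (fun z => ‖z - frobeniusFlatten T‖) (frobeniusFlatten '' K) (frobeniusFlatten W) :=
    fun hmin => isMinOn_iff.mpr <| Set.forall_mem_image.mpr fun Z hZ => by
      simpa only [← map_sub, norm_frobeniusFlatten] using isMinOn_iff.mp hmin Z hZ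
  simpa only [← map_sub, norm_frobeniusFlatten] using
    norm_sub_le_of_isMinOn (hK.linear_image frobeniusFlatten) (Set.mem_image_of_mem _ hW₁)
      (Set.mem_image_of_mem _ hW₂) (flatten_isMinOn hmin₁) (flatten_isMinOn hmin₂)

lemma convex_posSemidef_trace_eq {m : ℕ} (P : ℝ) :
    Convex ℝ {Z : Matrix (Fin m) (Fin m) ℂ | Z.PosSemidef ∧ Z.trace = (P : ℂ)} := by
  rintro X ⟨hX, hXP⟩ Y ⟨hY, hYP⟩ s t hs ht hst
  refine ⟨(hX.smul hs).add (hY.smul ht), ?_⟩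
  rw [trace_add, trace_smul, trace_smul, hXP, hYP, ← add_smul, hst, one_smul]

lemma Matrix.inv_conjTranspose_mul_inv_mul {n α : Type*} [Fintype n] [DecidableEq n] [CommRing α]
    [StarRing α] (G R : Matrix n n α) (hR : IsUnit R.det) :
    (Gᴴ * R⁻¹ * G)⁻¹ = G⁻¹ * R * G⁻¹ᴴ := by
  rw [mul_inv_rev, mul_inv_rev, nonsing_inv_nonsing_inv R hR, conjTranspose_nonsing_inv,
    Matrix.mul_assoc]

/-- The waterfilling solution `WF_q(Q_{-q})` is the Frobenius projection of this point onto
`{Q ⪰ 0 : Tr Q = P_q}` (with `G = H_qq`, `F r = H_rq`, `s` the users other than `q`). -/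
noncomputable def waterfillingTarget {ι : Type*} (s : Finset ι) {d : ι → ℕ} {m : ℕ}
    (G Rn : Matrix (Fin m) (Fin m) ℂ) (F : (r : ι) → Matrix (Fin m) (Fin (d r)) ℂ)
    (Qs : (r : ι) → Matrix (Fin (d r)) (Fin (d r)) ℂ) : Matrix (Fin m) (Fin m) ℂ :=
  -(Gᴴ * (Rn + ∑ r ∈ s, F r * Qs r * (F r)ᴴ)⁻¹ * G)⁻¹

section waterfillingTarget

variable {ι : Type*} (s : Finset ι) {d : ι → ℕ} {m : ℕ} (G : Matrix (Fin m) (Fin m) ℂ)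
  {Rn : Matrix (Fin m) (Fin m) ℂ} (F : (r : ι) → Matrix (Fin m) (Fin (d r)) ℂ)
  {Q₁ Q₂ : (r : ι) → Matrix (Fin (d r)) (Fin (d r)) ℂ}

lemma waterfillingTarget_eq {Qs : (r : ι) → Matrix (Fin (d r)) (Fin (d r)) ℂ}
    (hRn : Rn.PosDef) (hQs : ∀ r ∈ s, (Qs r).PosSemidef) :
    waterfillingTarget s G Rn F Qs = -(G⁻¹ * (Rn + ∑ r ∈ s, F r * Qs r * (F r)ᴴ) * G⁻¹ᴴ) := by
  have hR : (Rn + ∑ r ∈ s, F r * Qs r * (F r)ᴴ).PosDef :=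
    hRn.add_posSemidef <| posSemidef_sum s fun r hr => (hQs r hr).mul_mul_conjTranspose_same _
  rw [waterfillingTarget,
    inv_conjTranspose_mul_inv_mul _ _ ((isUnit_iff_isUnit_det _).mp hR.isUnit)]

lemma waterfillingTarget_sub (hRn : Rn.PosDef) (hQ₁ : ∀ r ∈ s, (Q₁ r).PosSemidef)
    (hQ₂ : ∀ r ∈ s, (Q₂ r).PosSemidef) :
    waterfillingTarget s G Rn F Q₁ - waterfillingTarget s G Rn F Q₂ =
      ∑ r ∈ s, (G⁻¹ * F r) * (Q₂ r - Q₁ r) * (G⁻¹ * F r)ᴴ := by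
  rw [waterfillingTarget_eq s G F hRn hQ₁, waterfillingTarget_eq s G F hRn hQ₂, neg_sub_neg,
    ← Matrix.sub_mul, ← Matrix.mul_sub, add_sub_add_left_eq_sub, ← Finset.sum_sub_distrib,
    Finset.mul_sum, Finset.sum_mul]
  refine Finset.sum_congr rfl fun r _ => ?_
  simp only [conjTranspose_mul, Matrix.mul_sub, Matrix.sub_mul, Matrix.mul_assoc]

lemma frobNorm_waterfillingTarget_sub_le (hRn : Rn.PosDef) (hQ₁ : ∀ r ∈ s, (Q₁ r).PosSemidef)
    (hQ₂ : ∀ r ∈ s, (Q₂ r).PosSemidef) :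
    frobNorm (waterfillingTarget s G Rn F Q₁ - waterfillingTarget s G Rn F Q₂) ≤
      ∑ r ∈ s, specRad ((F r)ᴴ * G⁻¹ᴴ * G⁻¹ * F r) * frobNorm (Q₁ r - Q₂ r) := by
  rw [waterfillingTarget_sub s G F hRn hQ₁ hQ₂]
  refine (frobNorm_sum_le s _).trans (Finset.sum_le_sum fun r _ => ?_)
  calc frobNorm ((G⁻¹ * F r) * (Q₂ r - Q₁ r) * (G⁻¹ * F r)ᴴ)
      ≤ specRad ((G⁻¹ * F r)ᴴ * (G⁻¹ * F r)) * frobNorm (Q₂ r - Q₁ r) :=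
        frobNorm_mul_mul_conjTranspose_le _ _
    _ = specRad ((F r)ᴴ * G⁻¹ᴴ * G⁻¹ * F r) * frobNorm (Q₁ r - Q₂ r) := by
        rw [conjTranspose_mul, frobNorm_sub_comm, Matrix.mul_assoc _ G⁻¹]

end waterfillingTarget

theorem mimo_waterfilling_contraction_general {Q : ℕ} (n : Fin Q → ℕ)
    (H : (r q : Fin Q) → Matrix (Fin (n q)) (Fin (n r)) ℂ)
    (Rn : (q : Fin Q) → Matrix (Fin (n q)) (Fin (n q)) ℂ)
    (hRn : ∀ q, (Rn q).PosDef)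
    (P : Fin Q → ℝ)
    (Q1 Q2 : (r : Fin Q) → Matrix (Fin (n r)) (Fin (n r)) ℂ)
    (hQ1 : ∀ r, (Q1 r).PosSemidef ∧ (Q1 r).trace = (P r : ℂ))
    (hQ2 : ∀ r, (Q2 r).PosSemidef ∧ (Q2 r).trace = (P r : ℂ))
    (W1 W2 : (q : Fin Q) → Matrix (Fin (n q)) (Fin (n q)) ℂ)
    (hW1 : ∀ q, ((W1 q).PosSemidef ∧ (W1 q).trace = (P q : ℂ)) ∧
      ∀ Z : Matrix (Fin (n q)) (Fin (n q)) ℂ, Z.PosSemidef → Z.trace = (P q : ℂ) →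
        frobNorm (W1 q -
          (-((H q q)ᴴ * (Rn q + ∑ r ∈ Finset.univ.erase q, H r q * Q1 r * (H r q)ᴴ)⁻¹ * H q q)⁻¹)) ≤
        frobNorm (Z -
          (-((H q q)ᴴ * (Rn q + ∑ r ∈ Finset.univ.erase q, H r q * Q1 r * (H r q)ᴴ)⁻¹ * H q q)⁻¹)))
    (hW2 : ∀ q, ((W2 q).PosSemidef ∧ (W2 q).trace = (P q : ℂ)) ∧
      ∀ Z : Matrix (Fin (n q)) (Fin (n q)) ℂ, Z.PosSemidef → Z.trace = (P q : ℂ) →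
        frobNorm (W2 q -
          (-((H q q)ᴴ * (Rn q + ∑ r ∈ Finset.univ.erase q, H r q * Q2 r * (H r q)ᴴ)⁻¹ * H q q)⁻¹)) ≤
        frobNorm (Z -
          (-((H q q)ᴴ * (Rn q + ∑ r ∈ Finset.univ.erase q, H r q * Q2 r * (H r q)ᴴ)⁻¹ * H q q)⁻¹))) :
    ∀ q, frobNorm (W1 q - W2 q) ≤
      ∑ r ∈ Finset.univ.erase q,
        specRad ((H r q)ᴴ * ((H q q)⁻¹)ᴴ * (H q q)⁻¹ * H r q) * frobNorm (Q1 r - Q2 r) := by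
  intro q
  calc frobNorm (W1 q - W2 q)
      ≤ frobNorm (waterfillingTarget (Finset.univ.erase q) (H q q) (Rn q) (H · q) Q1 -
          waterfillingTarget (Finset.univ.erase q) (H q q) (Rn q) (H · q) Q2) :=
        frobNorm_sub_le_of_isMinOn (convex_posSemidef_trace_eq (P q)) (hW1 q).1 (hW2 q).1
          (fun Z hZ => (hW1 q).2 Z hZ.1 hZ.2) (fun Z hZ => (hW2 q).2 Z hZ.1 hZ.2)
    _ ≤ _ := frobNorm_waterfillingTarget_sub_le _ _ _ (hRn q) (fun r _ => (hQ1 r).1)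
        (fun r _ => (hQ2 r).1)

/-- Contraction (blockwise Lipschitz) property of the MIMO waterfilling mapping:
if, for each user `q`, `W1 q` (resp. `W2 q`) is the Frobenius projection of
`−(H_qqᴴ R_{−q}(Q1)⁻¹ H_qq)⁻¹` (resp. with `Q2`) onto `{Q ⪰ 0 : Tr Q = P q}`, then
`‖W1 q − W2 q‖_F ≤ Σ_{r≠q} ρ(H_rqᴴ H_qq⁻ᴴ H_qq⁻¹ H_rq) ‖Q1 r − Q2 r‖_F`. -/
theorem mimo_waterfilling_contraction {Q : ℕ} (n : Fin Q → ℕ)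
    (H : (r q : Fin Q) → Matrix (Fin (n q)) (Fin (n r)) ℂ)
    (Rn : (q : Fin Q) → Matrix (Fin (n q)) (Fin (n q)) ℂ)
    (hRn : ∀ q, (Rn q).PosDef) (hH : ∀ q, IsUnit (H q q).det)
    (P : Fin Q → ℝ) (hP : ∀ q, 0 < P q)
    (Q1 Q2 : (r : Fin Q) → Matrix (Fin (n r)) (Fin (n r)) ℂ)
    (hQ1 : ∀ r, (Q1 r).PosSemidef ∧ (Q1 r).trace = (P r : ℂ))
    (hQ2 : ∀ r, (Q2 r).PosSemidef ∧ (Q2 r).trace = (P r : ℂ))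
    (W1 W2 : (q : Fin Q) → Matrix (Fin (n q)) (Fin (n q)) ℂ)
    (hW1 : ∀ q, ((W1 q).PosSemidef ∧ (W1 q).trace = (P q : ℂ)) ∧
      ∀ Z : Matrix (Fin (n q)) (Fin (n q)) ℂ, Z.PosSemidef → Z.trace = (P q : ℂ) →
        frobNorm (W1 q -
          (-((H q q)ᴴ * (Rn q + ∑ r ∈ Finset.univ.erase q, H r q * Q1 r * (H r q)ᴴ)⁻¹ * H q q)⁻¹)) ≤
        frobNorm (Z -
          (-((H q q)ᴴ * (Rn q + ∑ r ∈ Finset.univ.erase q, H r q * Q1 r * (H r q)ᴴ)⁻¹ * H q q)⁻¹)))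
    (hW2 : ∀ q, ((W2 q).PosSemidef ∧ (W2 q).trace = (P q : ℂ)) ∧
      ∀ Z : Matrix (Fin (n q)) (Fin (n q)) ℂ, Z.PosSemidef → Z.trace = (P q : ℂ) →
        frobNorm (W2 q -
          (-((H q q)ᴴ * (Rn q + ∑ r ∈ Finset.univ.erase q, H r q * Q2 r * (H r q)ᴴ)⁻¹ * H q q)⁻¹)) ≤
        frobNorm (Z -
          (-((H q q)ᴴ * (Rn q + ∑ r ∈ Finset.univ.erase q, H r q * Q2 r * (H r q)ᴴ)⁻¹ * H q q)⁻¹))) :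
    ∀ q, frobNorm (W1 q - W2 q) ≤
      ∑ r ∈ Finset.univ.erase q,
        specRad ((H r q)ᴴ * ((H q q)⁻¹)ᴴ * (H q q)⁻¹ * H r q) * frobNorm (Q1 r - Q2 r) :=
  mimo_waterfilling_contraction_general n H Rn hRn P Q1 Q2 hQ1 hQ2 W1 W2 hW1 hW2
end

section
/- Contraction of the SISO multiuser waterfilling mapping: with wf_q(p_{−q}) the Euclidean projection of −insr_q(p_{−q}) onto the simplex P_q, where [insr_q(p_{−q})]_k = (σ_q²(k) + Σ_{r≠q}|H_{rq}(k)|² p_r(k))/|H_{qq}(k)|², one has for all feasible p⁽¹⁾, p⁽²⁾ and each q: ‖wf_q(p_{−q}⁽¹⁾) − wf_q(p_{−q}⁽²⁾)‖₂ ≤ Σ_{r≠q} (max_k |H_{rq}(k)|²/|H_{qq}(k)|²) ‖p_r⁽¹⁾ − p_r⁽²⁾‖₂. -/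
/-- Euclidean norm on `ℝᴺ`. -/
noncomputable def eucNorm {N : ℕ} (z : Fin N → ℝ) : ℝ :=
  Real.sqrt (∑ k, (z k) ^ 2)

/-- The interference-to-signal vector `insr_q(p_{−q})` with components
`(σ_q²(k) + Σ_{r≠q} |H_rq(k)|² p_r(k)) / |H_qq(k)|²`. -/
noncomputable def insr {Qn N : ℕ} (H : Fin Qn → Fin Qn → Fin N → ℂ)
    (σ2 : Fin Qn → Fin N → ℝ) (q : Fin Qn) (p : Fin Qn → Fin N → ℝ) : Fin N → ℝ :=
  fun k => (σ2 q k + ∑ r ∈ Finset.univ.erase q, ‖H r q k‖ ^ 2 * p r k) / ‖H q q k‖ ^ 2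

/-!
The waterfilling map is the composition of the affine map `p ↦ −insr_q(p_{−q})` with the
Euclidean projection onto the convex set `P_q`. Projections onto convex sets are
nonexpansive (add the two variational inequalities `⟪u − v, w − v⟫ ≤ 0`), so it suffices to bound
`‖insr_q(p⁽¹⁾) − insr_q(p⁽²⁾)‖₂`, which is a sum over `r ≠ q` of the vectors
`p_r⁽¹⁾ − p_r⁽²⁾` scaled componentwise by `|H_rq(k)|²/|H_qq(k)|²`.
-/

open RealInnerProductSpace Finset

section Projection

variable {F : Type*} [NormedAddCommGroup F] [InnerProductSpace ℝ F] {K : Set F}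

theorem Convex.real_inner_sub_nonpos_of_isMinOn (hK : Convex ℝ K) {u v : F} (hv : v ∈ K)
    (hmin : IsMinOn (fun w => ‖w - u‖) K v) : ∀ w ∈ K, ⟪u - v, w - v⟫ ≤ 0 := by
  have : Nonempty K := ⟨⟨v, hv⟩⟩
  refine (norm_eq_iInf_iff_real_inner_le_zero hK hv).mp (le_antisymm ?_ ?_)
  · exact le_ciInf fun w => by simpa only [norm_sub_rev u] using isMinOn_iff.mp hmin w w.2
  · exact ciInf_le (f := fun w : K => ‖u - w‖)
      ⟨0, Set.forall_mem_range.2 fun _ => norm_nonneg _⟩ ⟨v, hv⟩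

theorem Convex.norm_sub_le_of_isMinOn (hK : Convex ℝ K) {u₁ u₂ v₁ v₂ : F}
    (hv₁ : v₁ ∈ K) (hv₂ : v₂ ∈ K) (hmin₁ : IsMinOn (fun w => ‖w - u₁‖) K v₁)
    (hmin₂ : IsMinOn (fun w => ‖w - u₂‖) K v₂) : ‖v₁ - v₂‖ ≤ ‖u₁ - u₂‖ := by
  have h₁ := hK.real_inner_sub_nonpos_of_isMinOn hv₁ hmin₁ v₂ hv₂
  have h₂ := hK.real_inner_sub_nonpos_of_isMinOn hv₂ hmin₂ v₁ hv₁
  have hsq : ‖v₁ - v₂‖ ^ 2 ≤ ‖u₁ - u₂‖ * ‖v₁ - v₂‖ :=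
    calc ‖v₁ - v₂‖ ^ 2 = ⟪v₁ - v₂, v₁ - v₂⟫ := (real_inner_self_eq_norm_sq _).symm
      _ ≤ ⟪u₁ - u₂, v₁ - v₂⟫ := by
        have hsplit : ⟪u₁ - u₂, v₁ - v₂⟫ - ⟪v₁ - v₂, v₁ - v₂⟫
            = -⟪u₁ - v₁, v₂ - v₁⟫ - ⟪u₂ - v₂, v₁ - v₂⟫ := by
          simp only [inner_sub_left, inner_sub_right]; ring
        linarith
      _ ≤ ‖u₁ - u₂‖ * ‖v₁ - v₂‖ := real_inner_le_norm _ _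
  nlinarith [norm_nonneg (u₁ - u₂), norm_nonneg (v₁ - v₂)]

end Projection

section EucNorm

variable {N : ℕ}

theorem eucNorm_eq_norm_toLp (z : Fin N → ℝ) :
    eucNorm z = ‖(WithLp.toLp 2 z : EuclideanSpace ℝ (Fin N))‖ := by
  simp [EuclideanSpace.norm_eq, eucNorm]

theorem eucNorm_sum_le {ι : Type*} (s : Finset ι) (f : ι → Fin N → ℝ) :
    eucNorm (∑ r ∈ s, f r) ≤ ∑ r ∈ s, eucNorm (f r) := by
  simp only [eucNorm_eq_norm_toLp, WithLp.toLp_sum]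
  exact norm_sum_le _ _

theorem eucNorm_sub_comm (x y : Fin N → ℝ) : eucNorm (x - y) = eucNorm (y - x) := by
  simp only [eucNorm_eq_norm_toLp, WithLp.toLp_sub, norm_sub_rev]

theorem eucNorm_mul_le_iSup_mul {g : Fin N → ℝ} (hg : ∀ k, 0 ≤ g k) (x : Fin N → ℝ) :
    eucNorm (fun k => g k * x k) ≤ (⨆ k, g k) * eucNorm x := by
  have hle : ∀ k, g k ≤ ⨆ k, g k := le_ciSup (Set.finite_range g).bddAbove
  have hnonneg : 0 ≤ ⨆ k, g k := Real.iSup_nonneg hg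
  rw [eucNorm, eucNorm, ← Real.sqrt_sq hnonneg, ← Real.sqrt_mul (sq_nonneg _), mul_sum]
  gcongr with k
  rw [mul_pow]
  exact mul_le_mul_of_nonneg_right (pow_le_pow_left₀ (hg k) (hle k) 2) (sq_nonneg _)

theorem Convex.eucNorm_sub_le_of_isMinOn {K : Set (Fin N → ℝ)} (hK : Convex ℝ K)
    {u₁ u₂ v₁ v₂ : Fin N → ℝ} (hv₁ : v₁ ∈ K) (hv₂ : v₂ ∈ K)
    (hmin₁ : IsMinOn (fun w => eucNorm (w - u₁)) K v₁)
    (hmin₂ : IsMinOn (fun w => eucNorm (w - u₂)) K v₂) :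
    eucNorm (v₁ - v₂) ≤ eucNorm (u₁ - u₂) := by
  have hK' := hK.linear_preimage (WithLp.linearEquiv 2 ℝ (Fin N → ℝ)).toLinearMap
  have hmin {u v : Fin N → ℝ} (h : IsMinOn (fun w => eucNorm (w - u)) K v) :
      IsMinOn (fun w : EuclideanSpace ℝ (Fin N) => ‖w - WithLp.toLp 2 u‖)
        (WithLp.linearEquiv 2 ℝ (Fin N → ℝ) ⁻¹' K) (WithLp.toLp 2 v) := fun w hw => by
    simpa [eucNorm_eq_norm_toLp] using h hw
  simpa [eucNorm_eq_norm_toLp] using hK'.norm_sub_le_of_isMinOn hv₁ hv₂ (hmin hmin₁) (hmin hmin₂)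

end EucNorm

def feasibleSet (ι : Type*) [Fintype ι] (P : ℝ) : Set (ι → ℝ) :=
  {z | (∀ k, 0 ≤ z k) ∧ ∑ k, z k = P}

theorem convex_feasibleSet (ι : Type*) [Fintype ι] (P : ℝ) : Convex ℝ (feasibleSet ι P) := by
  rintro x ⟨hx₀, hx⟩ y ⟨hy₀, hy⟩ a b ha hb hab
  refine ⟨fun k => ?_, ?_⟩
  · simp only [Pi.add_apply, Pi.smul_apply, smul_eq_mul]
    exact add_nonneg (mul_nonneg ha (hx₀ k)) (mul_nonneg hb (hy₀ k))
  · simp only [Pi.add_apply, Pi.smul_apply, smul_eq_mul, sum_add_distrib, ← mul_sum, hx, hy,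
      ← add_mul, hab, one_mul]

theorem insr_sub_insr {Qn N : ℕ} (H : Fin Qn → Fin Qn → Fin N → ℂ) (σ2 : Fin Qn → Fin N → ℝ)
    (q : Fin Qn) (p p' : Fin Qn → Fin N → ℝ) :
    insr H σ2 q p - insr H σ2 q p' =
      ∑ r ∈ univ.erase q, fun k => ‖H r q k‖ ^ 2 / ‖H q q k‖ ^ 2 * (p r k - p' r k) := by
  funext k
  simp only [insr, Pi.sub_apply, Finset.sum_apply]
  rw [div_sub_div_same, add_sub_add_left_eq_sub, ← sum_sub_distrib, sum_div]
  exact sum_congr rfl fun r _ => by ring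

theorem siso_waterfilling_contraction_general {Qn N : ℕ}
    (H : Fin Qn → Fin Qn → Fin N → ℂ)
    (σ2 : Fin Qn → Fin N → ℝ)
    (P : Fin Qn → ℝ)
    (p1 p2 : Fin Qn → Fin N → ℝ)
    (w1 w2 : Fin Qn → Fin N → ℝ)
    (hw1 : ∀ q, ((∀ k, 0 ≤ w1 q k) ∧ ∑ k, w1 q k = P q) ∧
      ∀ z : Fin N → ℝ, (∀ k, 0 ≤ z k) → (∑ k, z k = P q) →
        eucNorm (fun k => w1 q k - (-insr H σ2 q p1 k)) ≤
          eucNorm (fun k => z k - (-insr H σ2 q p1 k)))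
    (hw2 : ∀ q, ((∀ k, 0 ≤ w2 q k) ∧ ∑ k, w2 q k = P q) ∧
      ∀ z : Fin N → ℝ, (∀ k, 0 ≤ z k) → (∑ k, z k = P q) →
        eucNorm (fun k => w2 q k - (-insr H σ2 q p2 k)) ≤
          eucNorm (fun k => z k - (-insr H σ2 q p2 k))) :
    ∀ q, eucNorm (fun k => w1 q k - w2 q k) ≤
      ∑ r ∈ Finset.univ.erase q,
        (⨆ k, ‖H r q k‖ ^ 2 / ‖H q q k‖ ^ 2) * eucNorm (fun k => p1 r k - p2 r k) := by
  intro q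
  have hproj : eucNorm (w1 q - w2 q) ≤ eucNorm (-insr H σ2 q p1 - -insr H σ2 q p2) :=
    (convex_feasibleSet (Fin N) (P q)).eucNorm_sub_le_of_isMinOn (hw1 q).1 (hw2 q).1
      (fun z hz => (hw1 q).2 z hz.1 hz.2) (fun z hz => (hw2 q).2 z hz.1 hz.2)
  calc eucNorm (w1 q - w2 q)
      ≤ eucNorm (insr H σ2 q p1 - insr H σ2 q p2) := by
        rwa [neg_sub_neg, eucNorm_sub_comm (insr H σ2 q p2)] at hproj
    _ = eucNorm (∑ r ∈ univ.erase q,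
          fun k => ‖H r q k‖ ^ 2 / ‖H q q k‖ ^ 2 * (p1 r k - p2 r k)) := by
        rw [insr_sub_insr]
    _ ≤ ∑ r ∈ univ.erase q,
          eucNorm (fun k => ‖H r q k‖ ^ 2 / ‖H q q k‖ ^ 2 * (p1 r k - p2 r k)) :=
        eucNorm_sum_le _ _
    _ ≤ _ := sum_le_sum fun r _ => eucNorm_mul_le_iSup_mul (fun k => by positivity) _

/-- Contraction (blockwise Lipschitz) property of the SISO multiuser waterfilling
mapping: if `w1 q` (resp. `w2 q`) is the Euclidean projection of `−insr_q(p1)`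
(resp. `−insr_q(p2)`) onto the simplex `{p ∈ ℝ₊ᴺ : Σ p = P q}`, then
`‖w1 q − w2 q‖₂ ≤ Σ_{r≠q} (max_k |H_rq(k)|²/|H_qq(k)|²) ‖p1 r − p2 r‖₂`. -/
theorem siso_waterfilling_contraction {Qn N : ℕ} (hN : 0 < N)
    (H : Fin Qn → Fin Qn → Fin N → ℂ)
    (σ2 : Fin Qn → Fin N → ℝ) (hσ : ∀ q k, 0 ≤ σ2 q k)
    (hH : ∀ q k, H q q k ≠ 0)
    (P : Fin Qn → ℝ) (hP : ∀ q, 0 < P q)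
    (p1 p2 : Fin Qn → Fin N → ℝ)
    (hp1 : ∀ r, (∀ k, 0 ≤ p1 r k) ∧ ∑ k, p1 r k = P r)
    (hp2 : ∀ r, (∀ k, 0 ≤ p2 r k) ∧ ∑ k, p2 r k = P r)
    (w1 w2 : Fin Qn → Fin N → ℝ)
    (hw1 : ∀ q, ((∀ k, 0 ≤ w1 q k) ∧ ∑ k, w1 q k = P q) ∧
      ∀ z : Fin N → ℝ, (∀ k, 0 ≤ z k) → (∑ k, z k = P q) →
        eucNorm (fun k => w1 q k - (-insr H σ2 q p1 k)) ≤
          eucNorm (fun k => z k - (-insr H σ2 q p1 k)))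
    (hw2 : ∀ q, ((∀ k, 0 ≤ w2 q k) ∧ ∑ k, w2 q k = P q) ∧
      ∀ z : Fin N → ℝ, (∀ k, 0 ≤ z k) → (∑ k, z k = P q) →
        eucNorm (fun k => w2 q k - (-insr H σ2 q p2 k)) ≤
          eucNorm (fun k => z k - (-insr H σ2 q p2 k))) :
    ∀ q, eucNorm (fun k => w1 q k - w2 q k) ≤
      ∑ r ∈ Finset.univ.erase q,
        (⨆ k, ‖H r q k‖ ^ 2 / ‖H q q k‖ ^ 2) * eucNorm (fun k => p1 r k - p2 r k) :=
  siso_waterfilling_contraction_general H σ2 P p1 p2 w1 w2 hw1 hw2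
end
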